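/- arXiv:1102.4129 — 2 statements merged into one kernel-verified Lean document; each statement's English description precedes it below -/
import Mathlib

section
/- For the LMVT problem with n videos and B slots, the optimal value max over assignments f of min over videos i of Σ_{m: f(m)=i} r_{im} equals the maximum of min_i T[i] over all vectors T ∈ ℕⁿ with F(B, T), where F is the exact DP predicate. -/
/-
Running the recursion for `F` forwards along an assignment `f` shows that `F B` holds for the load
vector of every assignment; running it backwards turns a witness of `F B T` into an assignment whose
load dominates `T` coordinatewise (each step that credits video `i` assigns slot `m` to `i`). So the
two sets of values dominate each other elementwise and have the same supremum.
-/

/-- The exact dynamic programming predicate for LMVT: `F m T` holds iff an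
allocation of the first `m` slots (slots `1,…,m`) to the `n` videos exists
giving video `i` at least `T i` bits. Slot `m` gives video `i` rate `r i m`. -/
def F (n : ℕ) (r : Fin n → ℕ → ℕ) : ℕ → (Fin n → ℕ) → Prop
  | 0, T => T = 0
  | m + 1, T => F n r m T ∨ ∃ i : Fin n, F n r m (Function.update T i (T i - r i (m + 1)))

open Finset

def slotLoad {n : ℕ} (r : Fin n → ℕ → ℕ) (f : ℕ → Fin n) (B : ℕ) (i : Fin n) : ℕ :=
  ∑ m ∈ (Icc 1 B).filter (fun m => f m = i), r i m

section slotLoad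

variable {n : ℕ} (r : Fin n → ℕ → ℕ)

lemma slotLoad_succ (f : ℕ → Fin n) (B : ℕ) (i : Fin n) :
    slotLoad r f (B + 1) i = slotLoad r f B i + if f (B + 1) = i then r i (B + 1) else 0 := by
  simp only [slotLoad, sum_filter]
  exact sum_Icc_succ_top (by omega) _

lemma slotLoad_congr {f g : ℕ → Fin n} {B : ℕ} (hfg : ∀ m ∈ Icc 1 B, f m = g m) :
    slotLoad r f B = slotLoad r g B := by
  funext i
  exact sum_congr (filter_congr fun m hm => by rw [hfg m hm]) fun _ _ => rfl

lemma slotLoad_mono (f : ℕ → Fin n) {B : ℕ} : slotLoad r f B ≤ slotLoad r f (B + 1) :=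
  fun i => by rw [slotLoad_succ]; exact Nat.le_add_right _ _

lemma F_slotLoad (f : ℕ → Fin n) : ∀ B, F n r B (slotLoad r f B)
  | 0 => rfl
  | B + 1 => by
      refine Or.inr ⟨f (B + 1), ?_⟩
      convert F_slotLoad f B using 1
      funext j
      rcases eq_or_ne j (f (B + 1)) with rfl | hj
      · simp [slotLoad_succ]
      · simp [Function.update_of_ne hj, slotLoad_succ, Ne.symm hj]

lemma exists_le_slotLoad_of_F (i₀ : Fin n) :
    ∀ B (T : Fin n → ℕ), F n r B T → ∃ f : ℕ → Fin n, T ≤ slotLoad r f B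
  | 0, T, (hT : T = 0) => ⟨fun _ => i₀, fun _ => by simp [hT]⟩
  | B + 1, T, .inl hT => by
      obtain ⟨f, hf⟩ := exists_le_slotLoad_of_F i₀ B T hT
      exact ⟨f, hf.trans (slotLoad_mono r f)⟩
  | B + 1, T, .inr ⟨i, hT⟩ => by
      obtain ⟨f, hf⟩ := exists_le_slotLoad_of_F i₀ B _ hT
      have hload : slotLoad r (Function.update f (B + 1) i) B = slotLoad r f B :=
        slotLoad_congr r fun m hm => Function.update_of_ne (by simp at hm; omega) _ _
      refine ⟨Function.update f (B + 1) i, fun j => ?_⟩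
      have hfj := hf j
      rw [slotLoad_succ, hload, Function.update_self]
      rcases eq_or_ne j i with rfl | hj
      · simp only [Function.update_self, if_true] at hfj ⊢
        omega
      · simpa [Function.update_of_ne hj, Ne.symm hj] using hfj

end slotLoad

theorem stmt_12_general (n B : ℕ) (hn : 0 < n) (r : Fin n → ℕ → ℕ) :
    sSup {v : ℕ | ∃ f : ℕ → Fin n,
        v = ⨅ i : Fin n, ∑ m ∈ (Finset.Icc 1 B).filter (fun m => f m = i), r i m} =
    sSup {v : ℕ | ∃ T : Fin n → ℕ, F n r B T ∧ v = ⨅ i : Fin n, T i} := by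
  refine csSup_eq_csSup_of_forall_exists_le ?_ ?_
  · rintro _ ⟨f, rfl⟩
    exact ⟨_, ⟨slotLoad r f B, F_slotLoad r f B, rfl⟩, le_rfl⟩
  · rintro _ ⟨T, hT, rfl⟩
    obtain ⟨f, hf⟩ := exists_le_slotLoad_of_F r ⟨0, hn⟩ B T hT
    exact ⟨_, ⟨f, rfl⟩, ciInf_mono (OrderBot.bddBelow _) hf⟩

theorem stmt_12 (n B : ℕ) (hn : 0 < n) (r : Fin n → ℕ → ℕ) (hr : ∀ i m, 0 < r i m) :
    sSup {v : ℕ | ∃ f : ℕ → Fin n,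
        v = ⨅ i : Fin n, ∑ m ∈ (Finset.Icc 1 B).filter (fun m => f m = i), r i m} =
    sSup {v : ℕ | ∃ T : Fin n → ℕ, F n r B T ∧ v = ⨅ i : Fin n, T i} :=
  stmt_12_general n B hn r
end

section
/- For n ≥ 2 videos, the decision version of LMVT with linear lead function φ(b) = b is NP-hard: there is a polynomial-time many-one reduction from Partition to LMVT. -/
open Finset

section TwoColoring

variable {ι : Type*} [Fintype ι] (x : ι → ℕ)

theorem sum_filter_eq_zero_add_sum_filter_eq_one (f : ι → Fin 2) :
    ∑ j ∈ univ.filter (fun j => f j = 0), x j + ∑ j ∈ univ.filter (fun j => f j = 1), x j =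
      ∑ j, x j := by
  rw [← sum_fiberwise univ f x, Fin.sum_univ_two]

theorem exists_coloring_of_sum_eq_half {s : Finset ι} (hs : ∑ j ∈ s, x j = (∑ j, x j) / 2) :
    ∃ f : ι → Fin 2, ∀ i : Fin 2,
      (∑ j, x j) / 2 ≤ ∑ j ∈ univ.filter (fun j => f j = i), x j := by
  classical
  let f : ι → Fin 2 := fun j => if j ∈ s then 0 else 1
  have hfiber : univ.filter (fun j => f j = 0) = s := by
    ext j
    by_cases h : j ∈ s <;> simp [f, h]
  have htotal := sum_filter_eq_zero_add_sum_filter_eq_one x f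
  rw [hfiber, hs] at htotal
  refine ⟨f, fun i => ?_⟩
  fin_cases i
  · simp only [Fin.zero_eta, hfiber, hs, le_refl]
  · simp only [Fin.mk_one]
    omega

theorem exists_sum_eq_half_of_coloring (f : ι → Fin 2)
    (hf : ∀ i : Fin 2, (∑ j, x j) / 2 ≤ ∑ j ∈ univ.filter (fun j => f j = i), x j) :
    ∃ s : Finset ι, ∑ j ∈ s, x j = (∑ j, x j) / 2 := by
  have htotal := sum_filter_eq_zero_add_sum_filter_eq_one x f
  have h0 := hf 0
  have h1 := hf 1
  -- Both classes weigh at least half the total, so the lighter one weighs exactly half.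
  by_cases hle : ∑ j ∈ univ.filter (fun j => f j = 0), x j ≤
      ∑ j ∈ univ.filter (fun j => f j = 1), x j
  · exact ⟨univ.filter (fun j => f j = 0), by omega⟩
  · exact ⟨univ.filter (fun j => f j = 1), by omega⟩

end TwoColoring

theorem stmt_16_general (B : ℕ) (x : Fin B → ℕ) (U : ℕ)
    (hU : ∑ j, x j = U) :
    (∃ s : Finset (Fin B), ∑ j ∈ s, x j = U / 2) ↔
    (∃ f : Fin B → Fin 2, ∀ i : Fin 2,
      U / 2 ≤ ∑ j ∈ Finset.univ.filter (fun j => f j = i), x j) := by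
  subst hU
  exact ⟨fun ⟨_, hs⟩ => exists_coloring_of_sum_eq_half x hs,
    fun ⟨f, hf⟩ => exists_sum_eq_half_of_coloring x f hf⟩

/-- Correctness of the polynomial-time many-one reduction from Partition to the
LMVT decision problem with linear lead function φ(b) = b: the Partition instance
`x₁,…,x_B` (with sum `U`, `U` even) has a solution iff the LMVT instance with 2
videos, rates `r₁ⱼ = r₂ⱼ = xⱼ`, and threshold `k = U/2` has a solution. -/
theorem stmt_16 (B : ℕ) (x : Fin B → ℕ) (hx : ∀ j, 0 < x j) (U : ℕ)
    (hU : ∑ j, x j = U) (hEven : Even U) :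
    (∃ s : Finset (Fin B), ∑ j ∈ s, x j = U / 2) ↔
    (∃ f : Fin B → Fin 2, ∀ i : Fin 2,
      U / 2 ≤ ∑ j ∈ Finset.univ.filter (fun j => f j = i), x j) :=
  stmt_16_general B x U hU
end
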